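/- Let (X, μ) be a finite measure space, r ∈ (1,2), R ∈ L^∞(X), c > 0, and for each α > 0 let u_α : X → (0,∞) be measurable with u_α, u_α^{-1} ∈ L^r. Define Ṽ_α = min{ c·R + α (‖u_α‖_{L^r} / u_α)^{2-r}, 1 }. Then μ({ x : Ṽ_α(x) < 1/2 }) ≤ (C/α)^{r/(2-r)} for a constant C depending only on ‖R‖_∞, c, r, μ(X); in particular μ({Ṽ_α < 1/2}) → 0 as α → ∞. -/

import Mathlib

open MeasureTheory Filter

/-!
Since `|c R| ≤ |c| |Λ|`, on the set `{Ṽ_α < 1/2}` we have `α (‖u_α‖_r / u_α)^(2-r) < C`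
with `C = 1/2 + |c| |Λ|`, that is `‖u_α‖_r < (C/α)^(1/(2-r)) u_α`. Chebyshev's inequality
for `u_α ^ r` bounds the measure of this set by `((C/α)^(1/(2-r)))^r = (C/α)^(r/(2-r))`.
-/

namespace MeasureTheory

variable {X : Type*} [MeasurableSpace X] {μ : Measure X}

theorem measure_rpow_integral_rpow_lt_mul_le {f : X → ℝ} (hf : 0 ≤ f) {r : ℝ} (hr : 0 < r)
    (hfr : Integrable (fun x => f x ^ r) μ) {b : ℝ} (hb : 0 < b) :
    μ {x | (∫ y, f y ^ r ∂μ) ^ (1 / r) < b * f x} ≤ ENNReal.ofReal (b ^ r) := by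
  set I := ∫ y, f y ^ r ∂μ
  have hI : 0 ≤ I := integral_nonneg fun y => Real.rpow_nonneg (hf y) r
  have hbr : 0 < b ^ r := Real.rpow_pos_of_pos hb r
  have hsub : {x | I ^ (1 / r) < b * f x} ⊆ {x | I < b ^ r * f x ^ r} := by
    intro x hx
    have := Real.rpow_lt_rpow (Real.rpow_nonneg hI _) hx hr
    rwa [← Real.rpow_mul hI, one_div_mul_cancel hr.ne', Real.rpow_one,
      Real.mul_rpow hb.le (hf x)] at this
  refine (measure_mono hsub).trans ?_
  rcases hI.eq_or_lt with hI0 | hIpos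
  · have hzero : (fun x => f x ^ r) =ᵐ[μ] 0 :=
      (integral_eq_zero_iff_of_nonneg (fun y => Real.rpow_nonneg (hf y) r) hfr).1 hI0.symm
    rw [measure_mono_null (fun x hx => ?_) (ae_iff.1 hzero)]
    · exact zero_le
    simp only [Set.mem_ofPred_eq, ← hI0, Pi.zero_apply] at hx ⊢
    exact fun h => by simp [h] at hx
  · set ε := I / b ^ r
    have hε : 0 < ε := div_pos hIpos hbr
    have hsub' : {x | I < b ^ r * f x ^ r} ⊆ {x | ε ≤ f x ^ r} := fun x hx =>
      (div_le_iff₀' hbr).2 hx.le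
    have hfin : μ {x | ε ≤ f x ^ r} ≠ ⊤ := (hfr.measure_ge_lt_top hε).ne
    have hmarkov := mul_meas_ge_le_integral_of_nonneg
      (Eventually.of_forall fun y => Real.rpow_nonneg (hf y) r) hfr ε
    have hreal : μ.real {x | ε ≤ f x ^ r} ≤ b ^ r := by
      rwa [← le_div_iff₀' hε, div_div_cancel₀ hIpos.ne'] at hmarkov
    refine (measure_mono hsub').trans ?_
    rw [← ENNReal.ofReal_toReal hfin]
    exact ENNReal.ofReal_le_ofReal hreal

end MeasureTheory

theorem lt_rpow_inv_of_min_add_mul_rpow_lt_half {a K α q p : ℝ} (ha : -a ≤ K) (hα : 0 < α)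
    (hq : 0 ≤ q) (hp : 0 < p) (h : min (a + α * q ^ p) 1 < 1 / 2) :
    q < ((1 / 2 + K) / α) ^ p⁻¹ := by
  have hsum : a + α * q ^ p < 1 / 2 := by
    rcases min_lt_iff.1 h with h | h
    · exact h
    · norm_num at h
  have hqp : q ^ p < (1 / 2 + K) / α := by
    rw [lt_div_iff₀' hα]
    linarith
  exact (Real.lt_rpow_inv_iff_of_pos hq (by linarith [Real.rpow_nonneg hq p]) hp).2 hqp

theorem tendsto_ofReal_div_rpow_atTop {C p : ℝ} (hp : 0 < p) :
    Tendsto (fun α : ℝ => ENNReal.ofReal ((C / α) ^ p)) atTop (nhds 0) := by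
  have h := (tendsto_const_nhds (x := C).div_atTop tendsto_id).rpow_const (Or.inr hp.le)
  rw [Real.zero_rpow hp.ne'] at h
  simpa using ENNReal.tendsto_ofReal h

theorem truncated_potential_small_set_general {X : Type*} [MeasurableSpace X] (μ : Measure X)
    (r : ℝ) (hr1 : 1 < r) (hr2 : r < 2)
    (R : X → ℝ) (Λ : ℝ) (hRbdd : ∀ x, |R x| ≤ Λ)
    (c : ℝ)
    (u : ℝ → X → ℝ) (hupos : ∀ α x, 0 < u α x)
    (huLr : ∀ α, Integrable (fun x => u α x ^ r) μ) :
    ∃ C : ℝ, 0 < C ∧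
      (∀ α : ℝ, 0 < α →
        μ {x | min (c * R x +
              α * ((∫ y, u α y ^ r ∂μ) ^ (1 / r) / u α x) ^ (2 - r)) 1 < 1 / 2}
          ≤ ENNReal.ofReal ((C / α) ^ (r / (2 - r)))) ∧
      Tendsto (fun α : ℝ =>
          μ {x | min (c * R x +
              α * ((∫ y, u α y ^ r ∂μ) ^ (1 / r) / u α x) ^ (2 - r)) 1 < 1 / 2})
        atTop (nhds 0) := by
  have h2r : 0 < 2 - r := by linarith
  set C := 1 / 2 + |c| * |Λ|
  have hC : 0 < C := by positivity
  have hcR : ∀ x, -(c * R x) ≤ |c| * |Λ| := fun x => calc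
    -(c * R x) ≤ |c| * |R x| := (neg_le_abs _).trans (abs_mul c (R x)).le
    _ ≤ |c| * |Λ| :=
      mul_le_mul_of_nonneg_left ((hRbdd x).trans (le_abs_self Λ)) (abs_nonneg c)
  have hbound : ∀ α : ℝ, 0 < α →
      μ {x | min (c * R x +
            α * ((∫ y, u α y ^ r ∂μ) ^ (1 / r) / u α x) ^ (2 - r)) 1 < 1 / 2}
        ≤ ENNReal.ofReal ((C / α) ^ (r / (2 - r))) := by
    intro α hα
    set N := (∫ y, u α y ^ r ∂μ) ^ (1 / r)
    have hN : 0 ≤ N :=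
      Real.rpow_nonneg (integral_nonneg fun y => Real.rpow_nonneg (hupos α y).le r) _
    have hCα : 0 < C / α := div_pos hC hα
    calc _ ≤ μ {x | N < (C / α) ^ (2 - r)⁻¹ * u α x} := measure_mono fun x hx =>
          (div_lt_iff₀ (hupos α x)).1 <| lt_rpow_inv_of_min_add_mul_rpow_lt_half (hcR x) hα
            (div_nonneg hN (hupos α x).le) h2r hx
      _ ≤ ENNReal.ofReal (((C / α) ^ (2 - r)⁻¹) ^ r) :=
          measure_rpow_integral_rpow_lt_mul_le (fun x => (hupos α x).le) (by linarith) (huLr α)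
            (Real.rpow_pos_of_pos hCα _)
      _ = ENNReal.ofReal ((C / α) ^ (r / (2 - r))) := by
          rw [← Real.rpow_mul hCα.le, inv_mul_eq_div]
  refine ⟨C, hC, hbound, ?_⟩
  exact tendsto_of_tendsto_of_tendsto_of_le_of_le' tendsto_const_nhds
    (tendsto_ofReal_div_rpow_atTop (div_pos (by linarith) h2r))
    (Eventually.of_forall fun α => zero_le) ((eventually_gt_atTop 0).mono hbound)

/-- measure-smallness of the set where the truncated potential
`Ṽ_α = min{c·R + α(‖u_α‖_{L^r}/u_α)^{2-r}, 1}` is below `1/2`: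
`μ({Ṽ_α < 1/2}) ≤ (C/α)^{r/(2-r)}`, with `C` depending only on `‖R‖_∞, c, r, μ(X)`;
in particular this measure tends to `0` as `α → ∞`. -/
theorem truncated_potential_small_set {X : Type*} [MeasurableSpace X] (μ : Measure X)
    [IsFiniteMeasure μ] (r : ℝ) (hr1 : 1 < r) (hr2 : r < 2)
    (R : X → ℝ) (hRmeas : Measurable R) (Λ : ℝ) (hRbdd : ∀ x, |R x| ≤ Λ)
    (c : ℝ) (hc : 0 < c)
    (u : ℝ → X → ℝ) (humeas : ∀ α, Measurable (u α)) (hupos : ∀ α x, 0 < u α x)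
    (huLr : ∀ α, Integrable (fun x => u α x ^ r) μ)
    (huinvLr : ∀ α, Integrable (fun x => (u α x)⁻¹ ^ r) μ) :
    ∃ C : ℝ, 0 < C ∧
      (∀ α : ℝ, 0 < α →
        μ {x | min (c * R x +
              α * ((∫ y, u α y ^ r ∂μ) ^ (1 / r) / u α x) ^ (2 - r)) 1 < 1 / 2}
          ≤ ENNReal.ofReal ((C / α) ^ (r / (2 - r)))) ∧
      Tendsto (fun α : ℝ =>
          μ {x | min (c * R x +
              α * ((∫ y, u α y ^ r ∂μ) ^ (1 / r) / u α x) ^ (2 - r)) 1 < 1 / 2})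
        atTop (nhds 0) :=
  truncated_potential_small_set_general μ r hr1 hr2 R Λ hRbdd c u hupos huLr
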